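/- The step homogeneous quasi-norm ρ is a homogeneous quasi-norm: ρ(x)>0 for x≠0, ρ(Ax)=bρ(x) for all x, and there exists H∈[1,∞) such that ρ(x+y)≤H[ρ(x)+ρ(y)] for all x,y∈R^n. -/

import Mathlib

open MeasureTheory ENNReal Set Filter
open scoped Topology Pointwise NNReal ENNReal

noncomputable section

namespace Aniso

/-- `ℝ^n`, realized as functions `Fin n → ℝ`. -/
abbrev V (n : ℕ) := Fin n → ℝ

/-- Invertible real `n × n` matrices. -/
abbrev GLn (n : ℕ) := Matrix.GeneralLinearGroup (Fin n) ℝ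

variable {n : ℕ}

/-- `b := |det A|`. -/
def absDet (A : GLn n) : ℝ := |Matrix.det (A : Matrix (Fin n) (Fin n) ℝ)|

/-- A matrix is expansive (a dilation) if all of its (complex) eigenvalues have
modulus strictly greater than one. -/
def Expansive (A : GLn n) : Prop :=
  ∀ μ ∈ spectrum ℂ ((A : Matrix (Fin n) (Fin n) ℝ).map (algebraMap ℝ ℂ)),
    1 < ‖μ‖

/-- The Euclidean norm on `Fin n → ℝ`. -/
def euclNorm (x : V n) : ℝ := Real.sqrt (∑ i, x i ^ 2)

/-- An (open, centered) ellipsoid: the image of the open Euclidean unit ball under an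
invertible linear map. -/
def IsEllipsoid (Δ : Set (V n)) : Prop :=
  ∃ T : GLn n,
    Δ = (fun x => Matrix.mulVec (T : Matrix (Fin n) (Fin n) ℝ) x) '' {x | euclNorm x < 1}

/-- The sets `B_k := A^k Δ`. -/
def dball (A : GLn n) (Δ : Set (V n)) (k : ℤ) : Set (V n) :=
  (fun x => Matrix.mulVec ((A ^ k : GLn n) : Matrix (Fin n) (Fin n) ℝ) x) '' Δ

/-- The step homogeneous quasi-norm `ρ(x) := Σ_{k ∈ ℤ} b^k 1_{B_{k+1} \ B_k}(x)`
(so `ρ(0) = 0`). -/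
def rho (A : GLn n) (Δ : Set (V n)) (x : V n) : ℝ :=
  ∑' k : ℤ, (dball A Δ (k + 1) \ dball A Δ k).indicator (fun _ => absDet A ^ k) x

/-- The standing assumptions on a dilation `A` and the associated ellipsoid `Δ`:
`A` is expansive, `Δ` is an open ellipsoid with `|Δ| = 1`, and there is `r ∈ (1, ∞)`
with `Δ ⊆ rΔ ⊆ AΔ`. -/
structure DilationSetup (A : GLn n) (Δ : Set (V n)) (r : ℝ) : Prop where
  expansive : Expansive A
  isOpen : IsOpen Δ
  ellipsoid : IsEllipsoid Δ
  volume_eq : volume Δ = 1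
  one_lt : 1 < r
  subset_smul : Δ ⊆ r • Δ
  smul_subset : r • Δ ⊆ (fun x => Matrix.mulVec (A : Matrix (Fin n) (Fin n) ℝ) x) '' Δ

/-- The family `𝔅` of dilated balls `x + B_k`. -/
def dilatedBalls (A : GLn n) (Δ : Set (V n)) : Set (Set (V n)) :=
  {S | ∃ (x : V n) (k : ℤ), S = (x + ·) '' dball A Δ k}

/-- One step of the iterated mixed-norm: the `L^p` norm in one real variable, with the
usual modification (essential supremum) when `p = ∞`. -/
def lpStep (p : ℝ≥0∞) (g : ℝ → ℝ≥0∞) : ℝ≥0∞ :=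
  if p = ∞ then essSup g volume else (∫⁻ t, g t ^ p.toReal) ^ (1 / p.toReal)

/-- The mixed-norm `‖f‖_{L^{p⃗}(ℝ^n)}`, integrating first in `x₁`, then `x₂`, …,
finally `xₙ`, of an `ℝ≥0∞`-valued function. -/
def mixedNorm : ∀ (n : ℕ), (Fin n → ℝ≥0∞) → ((V n) → ℝ≥0∞) → ℝ≥0∞
  | 0, _, f => f (fun i => i.elim0)
  | (m + 1), p, f =>
      lpStep (p (Fin.last m))
        (fun t => mixedNorm m (fun i => p i.castSucc) (fun y => f (Fin.snoc y t)))

/-- The anisotropic Hardy–Littlewood maximal operator, over dilated balls. -/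
def maximalFn (A : GLn n) (Δ : Set (V n)) (f : V n → ℝ≥0∞) (x : V n) : ℝ≥0∞ :=
  ⨆ (S : Set (V n)) (_ : S ∈ dilatedBalls A Δ) (_ : x ∈ S),
    (volume S)⁻¹ * ∫⁻ z in S, f z

/-- The one-dimensional (uncentered) Hardy–Littlewood maximal operator acting in the
`i`-th coordinate. -/
def coordMax (i : Fin n) (g : V n → ℝ≥0∞) (x : V n) : ℝ≥0∞ :=
  ⨆ (a : ℝ) (b : ℝ) (_ : a ≤ x i) (_ : x i ≤ b) (_ : a < b),
    (ENNReal.ofReal (b - a))⁻¹ * ∫⁻ t in Set.Icc a b, g (Function.update x i t)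

/-- Auxiliary iteration: apply `coordMax` successively in coordinates `0, …, m-1`. -/
def iterMaxAux (g : V n → ℝ≥0∞) : ℕ → (V n → ℝ≥0∞)
  | 0 => g
  | (m + 1) => if h : m < n then coordMax ⟨m, h⟩ (iterMaxAux g m) else iterMaxAux g m

/-- The iterated maximal function `M(f) = Mₙ(⋯(M₁ f)⋯)`. -/
def iterMax (g : V n → ℝ≥0∞) : V n → ℝ≥0∞ := iterMaxAux g n

/-- The `ℓ^u` norm of a sequence in `ℝ≥0∞`, with the usual modification when `u = ∞`. -/
def ellu (u : ℝ≥0∞) (a : ℕ → ℝ≥0∞) : ℝ≥0∞ :=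
  if u = ∞ then ⨆ j, a j else (∑' j, a j ^ u.toReal) ^ (1 / u.toReal)

/-- Tempered distributions on `ℝ^n`. -/
abbrev TDist (n : ℕ) := SchwartzMap (V n) ℂ →L[ℝ] ℂ

/-- `|(f ∗ φ_k)(y)|`, where `φ_k(z) := b^k φ(A^k z)`: the pairing of the tempered
distribution `f` with the Schwartz function `z ↦ b^k φ(A^k(y − z))`. -/
def schwartzConv (A : GLn n) (f : TDist n) (φ : SchwartzMap (V n) ℂ) (k : ℤ)
    (y : V n) : ℝ≥0∞ :=
  ⨆ (ψ : SchwartzMap (V n) ℂ)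
    (_ : ∀ z, ψ z =
      (absDet A ^ k : ℝ) •
        φ (Matrix.mulVec ((A ^ k : GLn n) : Matrix (Fin n) (Fin n) ℝ) (y - z))),
    (‖f ψ‖₊ : ℝ≥0∞)

/-- The truncated non-tangential maximal function `M_φ^{(K,L)}(f)`. -/
def maxNT (A : GLn n) (Δ : Set (V n)) (f : TDist n) (φ : SchwartzMap (V n) ℂ)
    (K : ℤ) (L : ℝ) (x : V n) : ℝ≥0∞ :=
  ⨆ (k : ℤ) (_ : k ≤ K) (y : V n) (_ : y ∈ (x + ·) '' dball A Δ k),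
    schwartzConv A f φ k y *
      ENNReal.ofReal
        ((max 1 (rho A Δ (Matrix.mulVec ((A ^ (-K) : GLn n) : Matrix (Fin n) (Fin n) ℝ) y))) ^ (-L) *
          (1 + absDet A ^ (-k - K)) ^ (-L))

/-- The tangential maximal function `T_φ^{N(K,L)}(f)`. -/
def maxTan (A : GLn n) (Δ : Set (V n)) (f : TDist n) (φ : SchwartzMap (V n) ℂ)
    (N : ℕ) (K : ℤ) (L : ℝ) (x : V n) : ℝ≥0∞ :=
  ⨆ (k : ℤ) (_ : k ≤ K) (y : V n),
    schwartzConv A f φ k y *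
      ENNReal.ofReal
        ((max 1 (rho A Δ (Matrix.mulVec ((A ^ (-k) : GLn n) : Matrix (Fin n) (Fin n) ℝ) (x - y)))) ^ (-(N : ℝ)) *
          ((max 1 (rho A Δ (Matrix.mulVec ((A ^ (-K) : GLn n) : Matrix (Fin n) (Fin n) ℝ) y))) ^ (-L) *
            (1 + absDet A ^ (-k - K)) ^ (-L)))

/-- The partial derivative in the `i`-th coordinate direction. -/
def partialD (i : Fin n) (g : V n → ℂ) : V n → ℂ :=
  fun x => fderiv ℝ g x (Pi.single i 1)

/-- The iterated partial derivative `∂^α`. -/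
def multiD (α : Fin n → ℕ) (g : V n → ℂ) : V n → ℂ :=
  (List.finRange n).foldr (fun i h => (partialD i)^[α i] h) g

/-- Membership in `𝓢_N(ℝ^n)`: all seminorms `‖φ‖_{α,m} = sup_x ρ(x)^m |∂^α φ(x)|`
with `|α| ≤ N`, `m ≤ N` are at most `1`. -/
def InSN (A : GLn n) (Δ : Set (V n)) (N : ℕ) (φ : SchwartzMap (V n) ℂ) : Prop :=
  ∀ (α : Fin n → ℕ) (m : ℕ), (∑ i, α i) ≤ N → m ≤ N →
    ∀ x : V n, rho A Δ x ^ m * ‖multiD α (fun z => φ z) x‖ ≤ 1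

/-- The non-tangential grand maximal function `M_N(f)`. -/
def grandMaximal (A : GLn n) (Δ : Set (V n)) (N : ℕ) (f : TDist n) (x : V n) : ℝ≥0∞ :=
  ⨆ (φ : SchwartzMap (V n) ℂ) (_ : InSN A Δ N φ) (k : ℤ) (y : V n)
    (_ : y ∈ (x + ·) '' dball A Δ k), schwartzConv A f φ k y

/-- The anisotropic Peetre maximal function `(φ*_j f)_t`. -/
def peetre (A : GLn n) (Δ : Set (V n)) (f : TDist n) (φ : SchwartzMap (V n) ℂ)
    (j : ℤ) (t : ℝ) (x : V n) : ℝ≥0∞ :=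
  essSup (fun y => schwartzConv A f φ j (x + y) /
      ENNReal.ofReal ((1 + absDet A ^ j * rho A Δ y) ^ t)) volume

/-- The Fourier transform of a Schwartz function on `ℝ^n`. -/
def ft (φ : SchwartzMap (V n) ℂ) (ξ : V n) : ℂ :=
  ∫ x : V n, Complex.exp (-(2 * Real.pi * Complex.I) * (∑ i, (x i : ℂ) * (ξ i : ℂ))) * φ x

/-- The Hilbert–Schmidt norm `‖A‖` of a matrix. -/
def matNorm (A : GLn n) : ℝ := Real.sqrt (∑ i, ∑ j, ((A : Matrix (Fin n) (Fin n) ℝ) i j) ^ 2)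

/-- Polynomial functions on `ℝ^n` of (total) degree at most `s`. -/
def polyOfDeg (n s : ℕ) : Set (V n → ℂ) :=
  {P | ∃ Q : MvPolynomial (Fin n) ℂ, Q.totalDegree ≤ s ∧
    ∀ x, P x = MvPolynomial.eval (fun i => (x i : ℂ)) Q}

/-- The anisotropic mixed-norm Campanato seminorm `‖f‖_{𝓛^A_{p⃗,q,s}}`. -/
def campanato (A : GLn n) (Δ : Set (V n)) (p : Fin n → ℝ≥0∞) (q : ℝ) (s : ℕ)
    (f : V n → ℂ) : ℝ≥0∞ :=
  ⨆ (B : Set (V n)) (_ : B ∈ dilatedBalls A Δ), ⨅ (P : V n → ℂ) (_ : P ∈ polyOfDeg n s),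
    (volume B / mixedNorm n p (B.indicator fun _ => 1)) *
      ((volume B)⁻¹ * ∫⁻ x in B, (‖f x - P x‖₊ : ℝ≥0∞) ^ q) ^ (1 / q)

/-- An anisotropic mixed-norm `(p⃗, r, s)`-atom supported in the dilated ball `B`. -/
def IsMixedAtom (A : GLn n) (Δ : Set (V n)) (p : Fin n → ℝ≥0∞) (r : ℝ≥0∞) (s : ℕ)
    (a : V n → ℂ) (B : Set (V n)) : Prop :=
  B ∈ dilatedBalls A Δ ∧
  Function.support a ⊆ B ∧
  eLpNorm a r volume ≤ volume B ^ (1 / r).toReal / mixedNorm n p (B.indicator fun _ => 1) ∧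
  ∀ γ : Fin n → ℕ, (∑ i, γ i) ≤ s → (∫ x : V n, a x * ∏ i, (x i : ℂ) ^ γ i) = 0

/-- The quantity `‖{Σ_i [|λ_i| 1_{B_i} / ‖1_{B_i}‖_{p⃗}]^{p̲}}^{1/p̲}‖_{L^{p⃗}}`. -/
def atomSum (p : Fin n → ℝ≥0∞) (pu : ℝ) (lam : ℕ → ℂ) (Bs : ℕ → Set (V n)) : ℝ≥0∞ :=
  mixedNorm n p (fun x =>
    (∑' i, (((‖lam i‖₊ : ℝ≥0∞) * (Bs i).indicator (fun _ => (1 : ℝ≥0∞)) x) /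
        mixedNorm n p ((Bs i).indicator fun _ => 1)) ^ pu) ^ (1 / pu))

/-- The atomic quasi-norm of a function `g`: the infimum of `atomSum` over all atomic
decompositions `g = Σ λ_i a_i` converging in `𝓢'(ℝ^n)`. -/
def atomicNorm (A : GLn n) (Δ : Set (V n)) (p : Fin n → ℝ≥0∞) (pu : ℝ) (r : ℝ≥0∞)
    (s : ℕ) (g : V n → ℂ) : ℝ≥0∞ :=
  ⨅ (lam : ℕ → ℂ) (a : ℕ → V n → ℂ) (Bs : ℕ → Set (V n))
    (_ : ∀ i, IsMixedAtom A Δ p r s (a i) (Bs i))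
    (_ : ∀ ψ : SchwartzMap (V n) ℂ,
      Tendsto (fun m => ∑ i ∈ Finset.range m, lam i * ∫ x, a i x * ψ x) atTop
        (𝓝 (∫ x, g x * ψ x))),
    atomSum p pu lam Bs

/-! The sets `B_k = A^k Δ` increase with `k` (as `Δ ⊆ AΔ`), exhaust `ℝ^n` and shrink to
`{0}` (as `r^m Δ ⊆ B_m` with `r > 1`, and `Δ` is a bounded neighbourhood of `0`). Hence every
`x ≠ 0` lies in exactly one shell `B_{ℓ+1} \ B_ℓ`, where `ρ(x) = b^ℓ > 0`, and `A` maps the shell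
of level `ℓ` onto that of level `ℓ + 1`, so `ρ(Ax) = bρ(x)`. Since `Δ + Δ` is bounded,
`Δ + Δ ⊆ B_m` for some `m`, hence `B_k + B_k ⊆ B_{k+m}`, which gives
`ρ(x + y) ≤ b^m max(ρ(x), ρ(y))`. -/

theorem _root_.Monotone.exists_mem_diff_succ {α : Type*} {B : ℤ → Set α} (hB : Monotone B)
    {x : α} {j k : ℤ} (hj : x ∈ B j) (hk : x ∉ B k) :
    ∃ ℓ, x ∈ B (ℓ + 1) \ B ℓ := by
  obtain ⟨ℓ, hℓ, hmin⟩ := Int.exists_least_of_bdd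
    ⟨k + 1, fun z hz => by by_contra! hzk; exact hk (hB (show z ≤ k by omega) hz)⟩ ⟨j, hj⟩
  exact ⟨ℓ - 1, by simpa using hℓ, fun h => by have := hmin _ h; omega⟩

theorem _root_.Monotone.tsum_indicator_diff_succ {α : Type*} {B : ℤ → Set α} (hB : Monotone B)
    (c : ℤ → ℝ) {x : α} {ℓ : ℤ} (hx : x ∈ B (ℓ + 1) \ B ℓ) :
    ∑' k, (B (k + 1) \ B k).indicator (fun _ => c k) x = c ℓ := by
  rw [tsum_eq_single ℓ fun k hk => Set.indicator_of_notMem (fun hxk => ?_) _,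
    Set.indicator_of_mem hx]
  rcases hk.lt_or_gt with hlt | hgt
  · exact hx.2 (hB (by omega) hxk.1)
  · exact hxk.2 (hB (by omega) hx.1)

section Dball

variable (A : GLn n) (Δ : Set (V n))

theorem absDet_pos : 0 < absDet A :=
  abs_pos.mpr (Matrix.isUnit_iff_isUnit_det _ |>.mp A.isUnit).ne_zero

theorem dball_zero : dball A Δ 0 = Δ := by simp [dball]

theorem dball_one :
    dball A Δ 1 = (fun x => Matrix.mulVec (A : Matrix (Fin n) (Fin n) ℝ) x) '' Δ := by
  simp [dball]

theorem dball_dball (j k : ℤ) : dball A (dball A Δ k) j = dball A Δ (j + k) := by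
  simp only [dball, Set.image_image, Matrix.mulVec_mulVec, ← Matrix.GeneralLinearGroup.coe_mul,
    ← zpow_add]

theorem dball_smul (c : ℝ) (k : ℤ) : dball A (c • Δ) k = c • dball A Δ k :=
  image_smul_set (Matrix.mulVecLin ((A ^ k : GLn n) : Matrix (Fin n) (Fin n) ℝ)) c Δ

theorem dball_add_self (k : ℤ) : dball A (Δ + Δ) k = dball A Δ k + dball A Δ k :=
  Set.image_add (Matrix.mulVecLin ((A ^ k : GLn n) : Matrix (Fin n) (Fin n) ℝ))

theorem mulVec_mem_dball_iff (k : ℤ) (x : V n) :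
    Matrix.mulVec (A : Matrix (Fin n) (Fin n) ℝ) x ∈ dball A Δ (k + 1) ↔
      x ∈ dball A Δ k := by
  rw [add_comm, ← dball_dball, dball_one]
  exact (Matrix.mulVec_injective_iff_isUnit.mpr (A.isUnit)).mem_set_image

end Dball

section Rho

variable {A : GLn n} {Δ : Set (V n)}

theorem rho_nonneg (x : V n) : 0 ≤ rho A Δ x :=
  tsum_nonneg fun _ => Set.indicator_nonneg (fun _ _ => (zpow_pos (absDet_pos A) _).le) _

theorem rho_eq_zero_of_forall_mem {x : V n} (hx : ∀ k, x ∈ dball A Δ k) : rho A Δ x = 0 := by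
  rw [rho, tsum_congr fun k => Set.indicator_of_notMem (fun h => h.2 (hx k)) _, tsum_zero]

theorem rho_eq_of_mem_diff (hB : Monotone (dball A Δ)) {x : V n} {ℓ : ℤ}
    (hx : x ∈ dball A Δ (ℓ + 1) \ dball A Δ ℓ) : rho A Δ x = absDet A ^ ℓ :=
  hB.tsum_indicator_diff_succ _ hx

theorem rho_le_of_mem_dball (hB : Monotone (dball A Δ)) (hb : 1 ≤ absDet A) {x : V n} {k : ℤ}
    (hx : x ∈ dball A Δ (k + 1)) : rho A Δ x ≤ absDet A ^ k := by
  by_cases hall : ∀ j, x ∈ dball A Δ j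
  · rw [rho_eq_zero_of_forall_mem hall]
    exact (zpow_pos (absDet_pos A) _).le
  push Not at hall
  obtain ⟨j, hj⟩ := hall
  obtain ⟨ℓ, hℓ⟩ := hB.exists_mem_diff_succ hx hj
  have hℓk : ℓ ≤ k := by
    by_contra! hkℓ
    exact hℓ.2 (hB (show k + 1 ≤ ℓ by omega) hx)
  rw [rho_eq_of_mem_diff hB hℓ]
  exact zpow_le_zpow_right₀ hb hℓk

end Rho

theorem rho_mulVec (A : GLn n) (Δ : Set (V n)) (x : V n) :
    rho A Δ (Matrix.mulVec (A : Matrix (Fin n) (Fin n) ℝ) x) = absDet A * rho A Δ x := by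
  have hterm : ∀ j : ℤ,
      (dball A Δ (j + 1 + 1) \ dball A Δ (j + 1)).indicator (fun _ => absDet A ^ (j + 1))
        (Matrix.mulVec (A : Matrix (Fin n) (Fin n) ℝ) x) =
      absDet A * (dball A Δ (j + 1) \ dball A Δ j).indicator (fun _ => absDet A ^ j) x := by
    intro j
    classical
    simp only [Set.indicator_apply, Set.mem_sdiff, mulVec_mem_dball_iff, mul_ite, mul_zero,
      zpow_add_one₀ (absDet_pos A).ne', mul_comm]
  rw [rho, ← (Equiv.addRight (1 : ℤ)).tsum_eq]
  simp only [Equiv.coe_addRight, hterm, tsum_mul_left, rho]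

theorem IsEllipsoid.zero_mem {Δ : Set (V n)} (hΔ : IsEllipsoid Δ) : (0 : V n) ∈ Δ := by
  obtain ⟨T, rfl⟩ := hΔ
  exact ⟨0, by simp [euclNorm], Matrix.mulVec_zero _⟩

theorem IsEllipsoid.isBounded {Δ : Set (V n)} (hΔ : IsEllipsoid Δ) : Bornology.IsBounded Δ := by
  obtain ⟨T, rfl⟩ := hΔ
  have hball : {x : V n | euclNorm x < 1} ⊆ Metric.ball 0 1 := fun x hx => by
    rw [mem_ball_zero_iff, pi_norm_lt_iff one_pos]
    exact fun i => (Real.abs_le_sqrt (Finset.single_le_sum (f := fun j => x j ^ 2)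
      (fun j _ => sq_nonneg _) (Finset.mem_univ i))).trans_lt hx
  exact (Matrix.toLin' (T : Matrix (Fin n) (Fin n) ℝ)).toContinuousLinearMap.lipschitz
    |>.isBounded_image (Metric.isBounded_ball.subset hball)

section Dilation

variable {A : GLn n} {Δ : Set (V n)} {r : ℝ}

theorem zero_mem_dball (h0 : (0 : V n) ∈ Δ) (k : ℤ) : (0 : V n) ∈ dball A Δ k :=
  ⟨0, h0, Matrix.mulVec_zero _⟩

theorem monotone_dball (hΔ : Δ ⊆ dball A Δ 1) : Monotone (dball A Δ) :=
  monotone_int_of_le_succ fun k => by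
    rw [← dball_dball]
    exact Set.image_mono hΔ

theorem pow_smul_dball_subset (hr : r • Δ ⊆ dball A Δ 1) (m : ℕ) (k : ℤ) :
    r ^ m • dball A Δ k ⊆ dball A Δ (k + m) := by
  induction m with
  | zero => simp
  | succ m ih =>
    calc r ^ (m + 1) • dball A Δ k = r • r ^ m • dball A Δ k := by rw [pow_succ', mul_smul]
      _ ⊆ r • dball A Δ (k + m) := Set.smul_set_mono ih
      _ = dball A (r • Δ) (k + m) := (dball_smul A Δ r _).symm
      _ ⊆ dball A (dball A Δ 1) (k + m) := Set.image_mono hr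
      _ = dball A Δ (k + ↑(m + 1)) := by rw [dball_dball]; push_cast; ring_nf

theorem exists_subset_dball (hr : 1 < r) (hrΔ : r • Δ ⊆ dball A Δ 1) (hΔ : Δ ∈ 𝓝 0)
    {S : Set (V n)} (hS : Bornology.IsBounded S) : ∃ m : ℕ, S ⊆ dball A Δ m := by
  obtain ⟨ε, hε, hεΔ⟩ := Metric.mem_nhds_iff.mp hΔ
  obtain ⟨R, hR⟩ := hS.subset_ball 0
  obtain ⟨m, hm⟩ := pow_unbounded_of_one_lt (R / ε) hr
  have hrm : 0 < r ^ m := pow_pos (zero_lt_one.trans hr) m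
  refine ⟨m, fun x hx => ?_⟩
  have hxball : x ∈ r ^ m • Metric.ball (0 : V n) ε := by
    rw [smul_ball hrm.ne', smul_zero, Real.norm_of_nonneg hrm.le]
    exact Metric.ball_subset_ball (by rw [div_lt_iff₀ hε] at hm; linarith) (hR hx)
  simpa using pow_smul_dball_subset hrΔ m 0
    (by rw [dball_zero]; exact Set.smul_set_mono hεΔ hxball)

theorem exists_not_mem_dball (hr : 1 < r) (hrΔ : r • Δ ⊆ dball A Δ 1)
    (hΔ : Bornology.IsBounded Δ) {x : V n} (hx : x ≠ 0) : ∃ k, x ∉ dball A Δ k := by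
  obtain ⟨C, hC⟩ := hΔ.subset_ball 0
  have hxpos : 0 < ‖x‖ := norm_pos_iff.mpr hx
  obtain ⟨m, hm⟩ := pow_unbounded_of_one_lt (C / ‖x‖) hr
  have hrm : 0 < r ^ m := pow_pos (zero_lt_one.trans hr) m
  refine ⟨-m, fun hxm => ?_⟩
  have hΔx : r ^ m • x ∈ Δ := by
    simpa [dball_zero] using pow_smul_dball_subset hrΔ m (-m) (Set.smul_mem_smul_set hxm)
  have := hC hΔx
  rw [mem_ball_zero_iff, norm_smul, Real.norm_of_nonneg hrm.le] at this
  rw [div_lt_iff₀ hxpos] at hm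
  linarith

theorem one_le_absDet (hΔ : Δ ⊆ dball A Δ 1) (h0 : volume Δ ≠ 0)
    (hfin : volume Δ ≠ ∞) : 1 ≤ absDet A := by
  have hvol : volume (dball A Δ 1) = ENNReal.ofReal (absDet A) * volume Δ := by
    rw [dball_one, ← Matrix.coe_mulVecLin, ← Matrix.toLin'_apply',
      Measure.addHaar_image_linearMap, LinearMap.det_toLin', absDet]
  have hle : 1 * volume Δ ≤ ENNReal.ofReal (absDet A) * volume Δ := by
    rw [one_mul, ← hvol]
    exact measure_mono hΔ
  exact ENNReal.one_le_ofReal.mp ((ENNReal.mul_le_mul_iff_left h0 hfin).mp hle)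

end Dilation

namespace DilationSetup

variable {A : GLn n} {Δ : Set (V n)} {r : ℝ} (h : DilationSetup A Δ r)
include h

theorem smul_subset_dball_one : r • Δ ⊆ dball A Δ 1 := by
  rw [dball_one]
  exact h.smul_subset

theorem subset_dball_one : Δ ⊆ dball A Δ 1 :=
  h.subset_smul.trans h.smul_subset_dball_one

theorem monotone_dball : Monotone (dball A Δ) :=
  Aniso.monotone_dball h.subset_dball_one

theorem one_le_absDet : 1 ≤ absDet A :=
  Aniso.one_le_absDet h.subset_dball_one (by simp [h.volume_eq]) (by simp [h.volume_eq])

theorem exists_subset_dball {S : Set (V n)} (hS : Bornology.IsBounded S) :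
    ∃ m : ℕ, S ⊆ dball A Δ m :=
  Aniso.exists_subset_dball h.one_lt h.smul_subset_dball_one
    (h.isOpen.mem_nhds h.ellipsoid.zero_mem) hS

theorem exists_mem_dball_diff {x : V n} (hx : x ≠ 0) :
    ∃ ℓ, x ∈ dball A Δ (ℓ + 1) \ dball A Δ ℓ := by
  obtain ⟨j, hj⟩ := h.exists_subset_dball (Bornology.isBounded_singleton (x := x))
  obtain ⟨k, hk⟩ :=
    exists_not_mem_dball h.one_lt h.smul_subset_dball_one h.ellipsoid.isBounded hx
  exact h.monotone_dball.exists_mem_diff_succ (hj rfl) hk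

theorem rho_zero : rho A Δ 0 = 0 :=
  rho_eq_zero_of_forall_mem (zero_mem_dball h.ellipsoid.zero_mem)

theorem rho_pos {x : V n} (hx : x ≠ 0) : 0 < rho A Δ x := by
  obtain ⟨ℓ, hℓ⟩ := h.exists_mem_dball_diff hx
  rw [rho_eq_of_mem_diff h.monotone_dball hℓ]
  exact zpow_pos (absDet_pos A) ℓ

theorem rho_add_le {m : ℕ} (hm : Δ + Δ ⊆ dball A Δ m) (x y : V n) :
    rho A Δ (x + y) ≤ absDet A ^ m * (rho A Δ x + rho A Δ y) := by
  have hB := h.monotone_dball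
  have hb := h.one_le_absDet
  have hbm : 1 ≤ absDet A ^ m := one_le_pow₀ hb
  rcases eq_or_ne x 0 with rfl | hx
  · simpa [h.rho_zero] using le_mul_of_one_le_left (rho_nonneg y) hbm
  rcases eq_or_ne y 0 with rfl | hy
  · simpa [h.rho_zero] using le_mul_of_one_le_left (rho_nonneg x) hbm
  obtain ⟨k, hk⟩ := h.exists_mem_dball_diff hx
  obtain ⟨l, hl⟩ := h.exists_mem_dball_diff hy
  have hxy : x + y ∈ dball A Δ (max k l + m + 1) := by
    have hsum : dball A Δ (max k l + 1) + dball A Δ (max k l + 1) ⊆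
        dball A Δ (max k l + 1 + m) := by
      rw [← dball_add_self, ← dball_dball A Δ (max k l + 1) m]
      exact Set.image_mono hm
    rw [add_right_comm]
    exact hsum (Set.add_mem_add (hB (by omega) hk.1) (hB (by omega) hl.1))
  calc rho A Δ (x + y) ≤ absDet A ^ (max k l + m) := rho_le_of_mem_dball hB hb hxy
    _ = absDet A ^ m * max (absDet A ^ k) (absDet A ^ l) := by
      rw [zpow_add₀ (absDet_pos A).ne', zpow_natCast, mul_comm, (zpow_right_mono₀ hb).map_max]
    _ ≤ absDet A ^ m * (rho A Δ x + rho A Δ y) := by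
      rw [rho_eq_of_mem_diff hB hk, rho_eq_of_mem_diff hB hl]
      gcongr
      exact max_le_add_of_nonneg (zpow_pos (absDet_pos A) k).le (zpow_pos (absDet_pos A) l).le

end DilationSetup

/-- The step homogeneous quasi-norm is a homogeneous quasi-norm:
it is positive away from the origin, satisfies `ρ(Ax) = bρ(x)`, and satisfies the
quasi-triangle inequality for some `H ∈ [1, ∞)`. -/
theorem rho_is_quasinorm (n : ℕ) (A : GLn n) (Δ : Set (V n)) (r : ℝ)
    (h : DilationSetup A Δ r) :
    (∀ x : V n, x ≠ 0 → 0 < rho A Δ x) ∧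
    (∀ x : V n, rho A Δ (Matrix.mulVec (A : Matrix (Fin n) (Fin n) ℝ) x)
        = absDet A * rho A Δ x) ∧
    (∃ H : ℝ, 1 ≤ H ∧ ∀ x y : V n, rho A Δ (x + y) ≤ H * (rho A Δ x + rho A Δ y)) := by
  obtain ⟨m, hm⟩ := h.exists_subset_dball (h.ellipsoid.isBounded.add h.ellipsoid.isBounded)
  exact ⟨fun x => h.rho_pos, rho_mulVec A Δ, absDet A ^ m, one_le_pow₀ h.one_le_absDet,
    h.rho_add_le hm⟩

end Aniso
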